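/- Example 3 (sharpness of Theorems 1–3 for α ≤ 0): Let n ≥ 1, α ≤ 0, q > 1 and q > 1 + α/n, and let α̂ be any positive number with q > 1 + α̂/n. Let β = 1/(q−1), 1/(α̂n(q−1)) < γ ≤ 1/α̂², and 0 < κ ≤ (α̂n(γ − 1/(α̂n(q−1))))^{1/(q−1)}. Define u(t,x) = κ t^{−β} exp(−γ(1+|x|²)^{α̂/2}/t) for t > 0 and u(t,x) = 0 for t ≤ 0, and let a_{ij}(t,x) = (1+|x|²)^{(2−α̂)/2} δ_{ij}. Then the coefficients a_{ij} satisfy condition (8) with exponent α and some c > 0, and u is a C^∞, nonnegative, not identically zero function satisfying u_t(t,x) ≥ Σ_{i=1}^n ∂_{x_i}(a_{ii} ∂_{x_i}u)(t,x) + |u(t,x)|^{q−1}u(t,x) for every (t,x) ∈ ℝ × ℝⁿ. -/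

import Mathlib

open MeasureTheory

noncomputable section

/-- The whole space `ℝ × ℝⁿ` (time × space). -/
abbrev Sp (n : ℕ) : Type := ℝ × EuclideanSpace ℝ (Fin n)

/-- Classical partial derivative in the time direction. -/
def pdt {n : ℕ} (f : Sp n → ℝ) (p : Sp n) : ℝ :=
  fderiv ℝ f p (1, 0)

/-- Classical partial derivative in the `i`-th space direction. -/
def pdx {n : ℕ} (i : Fin n) (f : Sp n → ℝ) (p : Sp n) : ℝ :=
  fderiv ℝ f p (0, EuclideanSpace.single i 1)

/-- The odd nonlinearity `s ↦ |s|^(q-1) s` (with the convention `|0|^(q-1)·0 = 0`). -/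
def nl (q s : ℝ) : ℝ := |s| ^ (q - 1) * s

/-- A test function: infinitely differentiable with compact support. -/
def IsTest {n : ℕ} (φ : Sp n → ℝ) : Prop :=
  ContDiff ℝ (⊤ : ℕ∞) φ ∧ HasCompactSupport φ

/-- `g` is the weak time-derivative of `u` on `ℝ × ℝⁿ`: `g` is locally integrable and
integration by parts against every test function holds. -/
def IsWeakDerivT {n : ℕ} (u g : Sp n → ℝ) : Prop :=
  LocallyIntegrable g volume ∧
  ∀ φ : Sp n → ℝ, IsTest φ → ∫ p, u p * pdt φ p = -∫ p, g p * φ p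

/-- `g` is the weak `x_i`-derivative of `u` on `ℝ × ℝⁿ`. -/
def IsWeakDerivX {n : ℕ} (i : Fin n) (u g : Sp n → ℝ) : Prop :=
  LocallyIntegrable g volume ∧
  ∀ φ : Sp n → ℝ, IsTest φ → ∫ p, u p * pdx i φ p = -∫ p, g p * φ p

/-- Standing assumptions on the coefficients `a_{ij}` and the dominating function `A`:
measurability, local boundedness, symmetry, and `0 ≤ Σ a_{ij} ξ_i ξ_j ≤ A |ξ|²` a.e. -/
structure Coeffs (n : ℕ) (a : Fin n → Fin n → Sp n → ℝ) (A : Sp n → ℝ) : Prop where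
  meas : ∀ i j, Measurable (a i j)
  locBdd : ∀ i j, ∀ K : Set (Sp n), IsCompact K → ∃ C : ℝ, ∀ p ∈ K, |a i j p| ≤ C
  symm : ∀ᵐ p : Sp n, ∀ i j, a i j p = a j i p
  measA : Measurable A
  nonnegA : ∀ p, 0 ≤ A p
  locBddA : ∀ K : Set (Sp n), IsCompact K → ∃ C : ℝ, ∀ p ∈ K, A p ≤ C
  quad : ∀ᵐ p : Sp n, ∀ ξ : Fin n → ℝ,
    0 ≤ ∑ i : Fin n, ∑ j : Fin n, a i j p * ξ i * ξ j ∧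
    ∑ i : Fin n, ∑ j : Fin n, a i j p * ξ i * ξ j ≤ A p * ∑ i : Fin n, ξ i ^ 2

/-- Condition (8): the essential supremum of `A` over the slab `{R/2 < |x| < R}`
is at most `c·R^(2-α)`, for every `R > 1`. -/
def Cond8 {n : ℕ} (A : Sp n → ℝ) (α c : ℝ) : Prop :=
  ∀ R : ℝ, 1 < R →
    ∀ᵐ p : Sp n, (R / 2 < ‖p.2‖ ∧ ‖p.2‖ < R) → A p ≤ c * R ^ (2 - α)

/-- `(u, v)` is a weak solution of
`u_t − Σ ∂_{x_i}(a_{ij} ∂_{x_j}u) − |u|^{q−1}u ≥ v_t − Σ ∂_{x_i}(a_{ij} ∂_{x_j}v) − |v|^{q−1}v`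
in the whole space `ℝ × ℝⁿ`. -/
def WeakSolPair {n : ℕ} (q : ℝ) (a : Fin n → Fin n → Sp n → ℝ) (u v : Sp n → ℝ) : Prop :=
  Measurable u ∧ Measurable v ∧
  LocallyIntegrable u volume ∧ LocallyIntegrable v volume ∧
  LocallyIntegrable (fun p => |u p| ^ q) volume ∧
  LocallyIntegrable (fun p => |v p| ^ q) volume ∧
  ∃ ut vt : Sp n → ℝ, ∃ ux vx : Fin n → Sp n → ℝ,
    IsWeakDerivT u ut ∧ IsWeakDerivT v vt ∧
    (∀ j, IsWeakDerivX j u (ux j)) ∧ (∀ j, IsWeakDerivX j v (vx j)) ∧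
    ∀ φ : Sp n → ℝ, IsTest φ → (∀ p, 0 ≤ φ p) →
      ∫ p, (vt p * φ p + ∑ i : Fin n, ∑ j : Fin n, a i j p * pdx i φ p * vx j p
              - nl q (v p) * φ p) ≤
      ∫ p, (ut p * φ p + ∑ i : Fin n, ∑ j : Fin n, a i j p * pdx i φ p * ux j p
              - nl q (u p) * φ p)

/-- The Example 3 profile (built from the positive parameter `α̂`). -/
def profileU (n : ℕ) (αh β γ κ : ℝ) (p : Sp n) : ℝ :=
  if 0 < p.1 then κ * p.1 ^ (-β) * Real.exp (-γ * (1 + ‖p.2‖ ^ 2) ^ (αh / 2) / p.1) else 0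

/-- The diagonal coefficient `a_{ii}(t,x) = (1+|x|²)^{(2−α̂)/2}`. -/
def coefDiag (n : ℕ) (αh : ℝ) (p : Sp n) : ℝ :=
  (1 + ‖p.2‖ ^ 2) ^ ((2 - αh) / 2)

/-! For `t > 0`, `u = κ t^(-β) e^(-γ w / t)` with `w = (1 + |x|²)^(α̂/2)`. Differentiating `w`
produces `(1 + |x|²)^(α̂/2 - 1)`, which the coefficient `a_ii` cancels exactly, so
`a_ii ∂_i u = -(γ α̂ / t) x_i u` and
`Σ ∂_i (a_ii ∂_i u) = -(γ α̂ / t) u (n - γ α̂ |x|² (1 + |x|²)^(α̂/2 - 1) / t)`,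
while `u_t = u (-β / t + γ w / t²)`. Since `γ α̂² ≤ 1`, the second-order term is absorbed by
`γ w / t²`, and since `t u^(q-1) ≤ κ^(q-1) ≤ n γ α̂ - β`, so is the nonlinearity.
For `t ≤ 0` the profile vanishes, every such point is a minimum, and all the derivatives in the
inequality vanish there. Smoothness across `t = 0` follows from `u = κ W^(-β) g(t / W)` with
`W = γ w` and the smooth function `g(s) = s^(-β) e^(-1/s)` (extended by `0`). -/

open Real Filter Topology

section PartialDerivatives

variable {n : ℕ} {f : Sp n → ℝ} {p : Sp n}

theorem pdt_eq_of_hasDerivAt (hf : DifferentiableAt ℝ f p) {D : ℝ}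
    (h : HasDerivAt (fun τ => f (τ, p.2)) D p.1) : pdt f p = D := by
  have hline : HasLineDerivAt ℝ f (pdt f p) p (1, 0) := hf.hasFDerivAt.hasLineDerivAt _
  refine hline.unique ?_
  have h0 : HasDerivAt (fun τ => f (τ, p.2)) D (p.1 + 0) := by rwa [add_zero]
  unfold HasLineDerivAt
  convert h0.comp_const_add p.1 0 using 2 with s
  congr 1
  ext <;> simp

theorem pdx_eq_of_hasDerivAt (i : Fin n) (hf : DifferentiableAt ℝ f p) {D : ℝ}
    (h : HasDerivAt (fun s : ℝ => f (p.1, p.2 + s • EuclideanSpace.single i 1)) D 0) :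
    pdx i f p = D := by
  have hline : HasLineDerivAt ℝ f (pdx i f p) p (0, EuclideanSpace.single i 1) :=
    hf.hasFDerivAt.hasLineDerivAt _
  have hpath : (fun s : ℝ => f (p + s • ((0 : ℝ), EuclideanSpace.single i (1 : ℝ)))) =
      fun s => f (p.1, p.2 + s • EuclideanSpace.single i 1) := by
    ext s
    congr 1
    ext <;> simp
  refine hline.unique ?_
  unfold HasLineDerivAt
  rwa [hpath]

theorem pdx_eq_zero_of_forall_eq_zero (i : Fin n) (h : ∀ y, f (p.1, y) = 0) : pdx i f p = 0 := by
  by_cases hf : DifferentiableAt ℝ f p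
  · exact pdx_eq_of_hasDerivAt i hf (by simp only [h]; exact hasDerivAt_const _ _)
  · simp [pdx, fderiv_zero_of_not_differentiableAt hf]

theorem IsLocalMin.pdt_eq_zero (h : IsLocalMin f p) : pdt f p = 0 := by
  simp [pdt, h.fderiv_eq_zero]

theorem IsLocalMin.pdx_eq_zero (i : Fin n) (h : IsLocalMin f p) : pdx i f p = 0 := by
  simp [pdx, h.fderiv_eq_zero]

theorem ContDiff.pdx (i : Fin n) (hf : ContDiff ℝ (⊤ : ℕ∞) f) :
    ContDiff ℝ (⊤ : ℕ∞) (pdx i f) :=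
  (hf.fderiv_right (m := (⊤ : ℕ∞)) (by simp)).clm_apply contDiff_const

end PartialDerivatives

section ExpNegInvRpow

def expNegInvRpow (c x : ℝ) : ℝ := if 0 < x then x ^ (-c) * exp (-x⁻¹) else 0

variable {c x : ℝ}

theorem expNegInvRpow_of_pos (hx : 0 < x) : expNegInvRpow c x = x ^ (-c) * exp (-x⁻¹) :=
  if_pos hx

theorem expNegInvRpow_of_nonpos (hx : x ≤ 0) : expNegInvRpow c x = 0 :=
  if_neg hx.not_gt

theorem expNegInvRpow_eq_mul_add_one (c x : ℝ) :
    expNegInvRpow c x = x * expNegInvRpow (c + 1) x := by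
  rcases le_or_gt x 0 with hx | hx
  · simp [expNegInvRpow_of_nonpos hx]
  · rw [expNegInvRpow_of_pos hx, expNegInvRpow_of_pos hx, neg_add, rpow_add hx, rpow_neg_one]
    field_simp

theorem tendsto_expNegInvRpow_nhds_zero (c : ℝ) :
    Tendsto (expNegInvRpow c) (𝓝 0) (𝓝 0) := by
  have hleft : Tendsto (expNegInvRpow c) (𝓝[≤] 0) (𝓝 0) :=
    tendsto_const_nhds.congr' <| eventually_nhdsWithin_of_forall fun x hx =>
      (expNegInvRpow_of_nonpos hx).symm
  have hright : Tendsto (expNegInvRpow c) (𝓝[>] 0) (𝓝 0) := by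
    refine ((tendsto_rpow_mul_exp_neg_mul_atTop_nhds_zero c 1 one_pos).comp
      tendsto_inv_nhdsGT_zero).congr' <| eventually_nhdsWithin_of_forall fun x hx => ?_
    rw [Function.comp_apply, expNegInvRpow_of_pos hx, inv_rpow (le_of_lt hx), ← rpow_neg hx.le,
      neg_one_mul]
  simpa [← nhdsWithin_union] using hleft.sup hright

theorem hasDerivAt_expNegInvRpow (c x : ℝ) :
    HasDerivAt (expNegInvRpow c) (-c * expNegInvRpow (c + 1) x + expNegInvRpow (c + 2) x) x := by
  rcases lt_trichotomy x 0 with hx | rfl | hx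
  · rw [expNegInvRpow_of_nonpos hx.le, expNegInvRpow_of_nonpos hx.le, mul_zero, add_zero]
    refine (hasDerivAt_const x (0 : ℝ)).congr_of_eventuallyEq ?_
    filter_upwards [Iio_mem_nhds hx] with y hy using expNegInvRpow_of_nonpos (le_of_lt hy)
  · rw [expNegInvRpow_of_nonpos le_rfl, expNegInvRpow_of_nonpos le_rfl, mul_zero, add_zero,
      hasDerivAt_iff_tendsto_slope]
    refine ((tendsto_expNegInvRpow_nhds_zero (c + 1)).mono_left nhdsWithin_le_nhds).congr' ?_
    filter_upwards [self_mem_nhdsWithin] with y (hy : y ≠ 0)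
    rw [slope_def_field, expNegInvRpow_eq_mul_add_one c y, expNegInvRpow_of_nonpos le_rfl,
      sub_zero, sub_zero, mul_div_cancel_left₀ _ hy]
  · have hpow : HasDerivAt (fun y => y ^ (-c)) (-c * x ^ (-c - 1)) x :=
      hasDerivAt_rpow_const (Or.inl hx.ne')
    have hexp : HasDerivAt (fun y => exp (-y⁻¹)) (exp (-x⁻¹) * (x ^ 2)⁻¹) x := by
      simpa using ((hasDerivAt_inv hx.ne').neg).exp
    refine ((hpow.mul hexp).congr_of_eventuallyEq ?_).congr_deriv ?_
    · filter_upwards [Ioi_mem_nhds hx] with y hy using expNegInvRpow_of_pos hy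
    · rw [expNegInvRpow_of_pos hx, expNegInvRpow_of_pos hx, neg_add, neg_add, rpow_add hx,
        rpow_add hx, rpow_sub_one hx.ne', rpow_neg_one, rpow_neg hx.le 2, rpow_two]
      ring

theorem contDiff_expNegInvRpow (c : ℝ) : ContDiff ℝ (⊤ : ℕ∞) (expNegInvRpow c) := by
  suffices ∀ m : ℕ, ∀ c, ContDiff ℝ m (expNegInvRpow c) from contDiff_infty.2 fun m => this m c
  intro m
  induction m with
  | zero => exact fun c => contDiff_zero.2 <| continuous_iff_continuousAt.2 fun x =>
      (hasDerivAt_expNegInvRpow c x).continuousAt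
  | succ m ih =>
    intro c
    rw [Nat.cast_succ, contDiff_succ_iff_deriv]
    refine ⟨fun x => (hasDerivAt_expNegInvRpow c x).differentiableAt, by simp, ?_⟩
    rw [show deriv (expNegInvRpow c) = _ from funext fun x => (hasDerivAt_expNegInvRpow c x).deriv]
    exact (contDiff_const.mul (ih (c + 1))).add (ih (c + 2))

end ExpNegInvRpow

section Profile

variable {n : ℕ} {αh β γ κ : ℝ}

theorem profileU_of_nonpos {p : Sp n} (ht : p.1 ≤ 0) : profileU n αh β γ κ p = 0 :=
  if_neg ht.not_gt

theorem profileU_nonneg (hκ : 0 ≤ κ) (p : Sp n) : 0 ≤ profileU n αh β γ κ p := by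
  unfold profileU
  split_ifs <;> positivity

theorem profileU_pos (hκ : 0 < κ) {p : Sp n} (ht : 0 < p.1) : 0 < profileU n αh β γ κ p := by
  rw [profileU, if_pos ht]
  positivity

theorem isLocalMin_profileU (hκ : 0 ≤ κ) {p : Sp n} (ht : p.1 ≤ 0) :
    IsLocalMin (profileU n αh β γ κ) p :=
  Eventually.of_forall fun p' => (profileU_of_nonpos ht).trans_le (profileU_nonneg hκ p')

theorem profileU_eq_expNegInvRpow (hγ : 0 < γ) (p : Sp n) :
    profileU n αh β γ κ p = κ * (γ * (1 + ‖p.2‖ ^ 2) ^ (αh / 2)) ^ (-β) *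
      expNegInvRpow β (p.1 / (γ * (1 + ‖p.2‖ ^ 2) ^ (αh / 2))) := by
  have hW : 0 < γ * (1 + ‖p.2‖ ^ 2) ^ (αh / 2) := by positivity
  rcases le_or_gt p.1 0 with ht | ht
  · rw [profileU_of_nonpos ht, expNegInvRpow_of_nonpos (div_nonpos_of_nonpos_of_nonneg ht hW.le),
      mul_zero]
  · rw [profileU, if_pos ht, expNegInvRpow_of_pos (div_pos ht hW), div_rpow ht.le hW.le, inv_div,
      rpow_neg hW.le, rpow_neg ht.le]
    have hWβ : 0 < (γ * (1 + ‖p.2‖ ^ 2) ^ (αh / 2)) ^ β := by positivity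
    field_simp

theorem contDiff_profileU (hγ : 0 < γ) : ContDiff ℝ (⊤ : ℕ∞) (profileU n αh β γ κ) := by
  have hW : ContDiff ℝ (⊤ : ℕ∞) fun p : Sp n => γ * (1 + ‖p.2‖ ^ 2) ^ (αh / 2) :=
    contDiff_const.mul
      ((Function.hasTemperateGrowth_one_add_norm_sq_rpow _ (αh / 2)).1.comp contDiff_snd)
  have hW0 (p : Sp n) : γ * (1 + ‖p.2‖ ^ 2) ^ (αh / 2) ≠ 0 := by positivity
  rw [funext (profileU_eq_expNegInvRpow hγ)]
  exact (contDiff_const.mul (contDiff_iff_contDiffAt.2 fun p =>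
      hW.contDiffAt.rpow_const_of_ne (hW0 p))).mul
    ((contDiff_expNegInvRpow β).comp (contDiff_fst.div hW hW0))

end Profile

theorem hasDerivAt_one_add_norm_sq_rpow_line {E : Type*} [NormedAddCommGroup E]
    [InnerProductSpace ℝ E] (a : ℝ) (x v : E) :
    HasDerivAt (fun s : ℝ => (1 + ‖x + s • v‖ ^ 2) ^ a)
      (2 * inner ℝ x v * a * (1 + ‖x‖ ^ 2) ^ (a - 1)) 0 := by
  have hline : HasDerivAt (fun s : ℝ => x + s • v) v 0 := by
    simpa using ((hasDerivAt_id (0 : ℝ)).smul_const v).const_add x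
  simpa using (hline.norm_sq.const_add 1).rpow_const (Or.inl (by positivity))

section ProfileDerivatives

variable {n : ℕ} {αh β γ κ : ℝ} {t : ℝ}

theorem hasDerivAt_profileU_time (ht : 0 < t) (x : EuclideanSpace ℝ (Fin n)) :
    HasDerivAt (fun τ => profileU n αh β γ κ (τ, x))
      (profileU n αh β γ κ (t, x) * (-β / t + γ * (1 + ‖x‖ ^ 2) ^ (αh / 2) / t ^ 2)) t := by
  set c := γ * (1 + ‖x‖ ^ 2) ^ (αh / 2)
  have hpow : HasDerivAt (fun τ => τ ^ (-β)) (-β * t ^ (-β - 1)) t :=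
    hasDerivAt_rpow_const (Or.inl ht.ne')
  have hexp : HasDerivAt (fun τ => exp (-c / τ)) (exp (-c / t) * (c / t ^ 2)) t := by
    convert ((hasDerivAt_inv ht.ne').const_mul (-c)).exp using 1
    · ext τ; rw [div_eq_mul_inv]
    · rw [div_eq_mul_inv]; ring
  refine (((hpow.const_mul κ).mul hexp).congr_of_eventuallyEq ?_).congr_deriv ?_
  · filter_upwards [Ioi_mem_nhds ht] with τ (hτ : 0 < τ)
    rw [profileU, if_pos hτ, neg_mul]
    rfl
  · rw [profileU, if_pos ht, rpow_sub_one ht.ne']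
    simp only [c, neg_mul]
    field_simp

theorem hasDerivAt_profileU_space (ht : 0 < t) (x : EuclideanSpace ℝ (Fin n)) (i : Fin n) :
    HasDerivAt (fun s : ℝ => profileU n αh β γ κ (t, x + s • EuclideanSpace.single i 1))
      (-(γ * αh * x i * (1 + ‖x‖ ^ 2) ^ (αh / 2 - 1) / t) * profileU n αh β γ κ (t, x)) 0 := by
  simp only [profileU, if_pos ht]
  have hw := hasDerivAt_one_add_norm_sq_rpow_line (αh / 2) x (EuclideanSpace.single i (1 : ℝ))
  refine (((hw.const_mul (-γ)).div_const t).exp.const_mul (κ * t ^ (-β))).congr_deriv ?_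
  simp only [zero_smul, add_zero, neg_mul, EuclideanSpace.inner_single_right, ringHom_apply,
    one_mul]
  ring

end ProfileDerivatives

section ProfilePartials

variable {n : ℕ} {αh β γ κ : ℝ} {p : Sp n}

theorem pdt_profileU (hγ : 0 < γ) (ht : 0 < p.1) :
    pdt (profileU n αh β γ κ) p =
      profileU n αh β γ κ p * (-β / p.1 + γ * (1 + ‖p.2‖ ^ 2) ^ (αh / 2) / p.1 ^ 2) :=
  pdt_eq_of_hasDerivAt ((contDiff_profileU hγ).differentiable (by simp) p)
    (hasDerivAt_profileU_time ht p.2)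

theorem coefDiag_mul_pdx_profileU (hγ : 0 < γ) (ht : 0 < p.1) (i : Fin n) :
    coefDiag n αh p * pdx i (profileU n αh β γ κ) p =
      -(γ * αh / p.1) * p.2 i * profileU n αh β γ κ p := by
  rw [pdx_eq_of_hasDerivAt i ((contDiff_profileU hγ).differentiable (by simp) p)
    (hasDerivAt_profileU_space ht p.2 i), coefDiag]
  have hB : (1 + ‖p.2‖ ^ 2) ^ ((2 - αh) / 2) * (1 + ‖p.2‖ ^ 2) ^ (αh / 2 - 1) = 1 := by
    rw [← rpow_add (zero_lt_one_add_norm_sq _), show (2 - αh) / 2 + (αh / 2 - 1) = 0 by ring,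
      rpow_zero]
  linear_combination (-(γ * αh / p.1) * p.2 i * profileU n αh β γ κ p) * hB

theorem coefDiag_mul_pdx_profileU_of_nonpos (hκ : 0 ≤ κ) (ht : p.1 ≤ 0) (i : Fin n) :
    coefDiag n αh p * pdx i (profileU n αh β γ κ) p = 0 := by
  rw [(isLocalMin_profileU hκ ht).pdx_eq_zero, mul_zero]

theorem pdx_coefDiag_mul_pdx_profileU (hγ : 0 < γ) (ht : 0 < p.1) (i : Fin n) :
    pdx i (fun p' => coefDiag n αh p' * pdx i (profileU n αh β γ κ) p') p =
      -(γ * αh / p.1) * profileU n αh β γ κ p *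
        (1 - γ * αh * p.2 i ^ 2 * (1 + ‖p.2‖ ^ 2) ^ (αh / 2 - 1) / p.1) := by
  have hdiff : ContDiff ℝ (⊤ : ℕ∞)
      (fun p' : Sp n => coefDiag n αh p' * pdx i (profileU n αh β γ κ) p') :=
    ((Function.hasTemperateGrowth_one_add_norm_sq_rpow _ _).1.comp contDiff_snd).mul
      ((contDiff_profileU hγ).pdx i)
  have hline : (fun s : ℝ => coefDiag n αh (p.1, p.2 + s • EuclideanSpace.single i 1) *
      pdx i (profileU n αh β γ κ) (p.1, p.2 + s • EuclideanSpace.single i 1)) =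
      fun s => -(γ * αh / p.1) * (p.2 i + s) *
        profileU n αh β γ κ (p.1, p.2 + s • EuclideanSpace.single i 1) := by
    ext s
    rw [coefDiag_mul_pdx_profileU (p := (p.1, p.2 + s • EuclideanSpace.single i 1)) hγ ht]
    simp
  refine pdx_eq_of_hasDerivAt i (hdiff.differentiable (by simp) p) ?_
  rw [hline]
  have hcoord : HasDerivAt (fun s : ℝ => p.2 i + s) 1 0 := (hasDerivAt_id 0).const_add _
  refine ((hcoord.const_mul _).mul (hasDerivAt_profileU_space ht p.2 i)).congr_deriv ?_
  simp only [add_zero, zero_smul, Prod.mk.eta]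
  field_simp
  ring

end ProfilePartials

theorem cond8_coefDiag {n : ℕ} {α αh : ℝ} (hα : α ≤ 0) (hαh : 0 ≤ αh) :
    Cond8 (fun p : Sp n => coefDiag n αh p) α 2 := by
  intro R hR
  refine Eventually.of_forall fun p hp => ?_
  have hB : 1 ≤ 1 + ‖p.2‖ ^ 2 := le_add_of_nonneg_right (by positivity)
  calc coefDiag n αh p ≤ (1 + ‖p.2‖ ^ 2) ^ (1 : ℝ) :=
        rpow_le_rpow_of_exponent_le hB (by linarith)
    _ ≤ 2 * R ^ (2 : ℝ) := by
        rw [rpow_one, rpow_two]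
        nlinarith [hp.2, norm_nonneg p.2]
    _ ≤ 2 * R ^ (2 - α) := by
        gcongr
        · exact hR.le
        · linarith

theorem mul_one_add_rpow_sub_one_le {s : ℝ} (hs : 0 ≤ s) (a : ℝ) :
    s * (1 + s) ^ (a - 1) ≤ (1 + s) ^ a := by
  have h1s : 0 < 1 + s := by linarith
  rw [rpow_sub_one h1s.ne', mul_div_assoc']
  exact div_le_of_le_mul₀ h1s.le (by positivity) (by nlinarith [rpow_pos_of_pos h1s a])

section Supersolution

variable {n : ℕ} {αh β γ κ q : ℝ} {p : Sp n}

theorem sum_pdx_coefDiag_mul_pdx_profileU (hγ : 0 < γ) (ht : 0 < p.1) :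
    ∑ i : Fin n, pdx i (fun p' => coefDiag n αh p' * pdx i (profileU n αh β γ κ) p') p =
      -(γ * αh / p.1) * profileU n αh β γ κ p *
        (n - γ * αh * ‖p.2‖ ^ 2 * (1 + ‖p.2‖ ^ 2) ^ (αh / 2 - 1) / p.1) := by
  simp_rw [pdx_coefDiag_mul_pdx_profileU hγ ht, ← Finset.mul_sum, Finset.sum_sub_distrib,
    EuclideanSpace.real_norm_sq_eq, ← Finset.sum_div, ← Finset.sum_mul, ← Finset.mul_sum]
  simp

theorem mul_profileU_rpow_le (hκ : 0 ≤ κ) (hγ : 0 ≤ γ) (hq : 1 ≤ q) (hβ : β * (q - 1) = 1)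
    (ht : 0 < p.1) : p.1 * profileU n αh β γ κ p ^ (q - 1) ≤ κ ^ (q - 1) := by
  set E := exp (-γ * (1 + ‖p.2‖ ^ 2) ^ (αh / 2) / p.1)
  have hE : E ^ (q - 1) ≤ 1 := by
    refine rpow_le_one (exp_pos _).le (exp_le_one_iff.2 ?_) (by linarith)
    exact div_nonpos_of_nonpos_of_nonneg (by rw [neg_mul]; exact neg_nonpos.2 (by positivity))
      ht.le
  rw [profileU, if_pos ht, mul_rpow (by positivity) (by positivity),
    mul_rpow hκ (by positivity), ← rpow_mul ht.le, neg_mul, hβ, rpow_neg_one]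
  calc p.1 * (κ ^ (q - 1) * p.1⁻¹ * E ^ (q - 1)) = κ ^ (q - 1) * E ^ (q - 1) := by field_simp
    _ ≤ κ ^ (q - 1) * 1 := by gcongr
    _ = κ ^ (q - 1) := mul_one _

theorem profileU_supersolution_of_nonpos (hκ : 0 ≤ κ) (ht : p.1 ≤ 0) :
    (∑ i : Fin n, pdx i (fun p' => coefDiag n αh p' * pdx i (profileU n αh β γ κ) p') p) +
      nl q (profileU n αh β γ κ p) ≤ pdt (profileU n αh β γ κ) p := by
  have hflux (i : Fin n) :
      pdx i (fun p' => coefDiag n αh p' * pdx i (profileU n αh β γ κ) p') p = 0 :=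
    pdx_eq_zero_of_forall_eq_zero i fun y =>
      coefDiag_mul_pdx_profileU_of_nonpos (p := (p.1, y)) hκ ht i
  simp [hflux, (isLocalMin_profileU hκ ht).pdt_eq_zero, profileU_of_nonpos ht, nl]

theorem profileU_supersolution_of_pos (hq : 1 < q) (hβ : β * (q - 1) = 1) (hγ : 0 < γ)
    (hγαh : γ * αh ^ 2 ≤ 1) (hκ : 0 < κ) (hκq : κ ^ (q - 1) ≤ n * γ * αh - β) (ht : 0 < p.1) :
    (∑ i : Fin n, pdx i (fun p' => coefDiag n αh p' * pdx i (profileU n αh β γ κ) p') p) +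
      nl q (profileU n αh β γ κ p) ≤ pdt (profileU n αh β γ κ) p := by
  set u := profileU n αh β γ κ p
  set t := p.1
  set B := 1 + ‖p.2‖ ^ 2
  have hu : 0 < u := profileU_pos hκ ht
  have hnl : t * u ^ (q - 1) ≤ n * γ * αh - β :=
    (mul_profileU_rpow_le hκ.le hγ.le hq.le hβ ht).trans hκq
  have hdiff : (γ * αh) ^ 2 * (‖p.2‖ ^ 2 * B ^ (αh / 2 - 1)) ≤ γ * B ^ (αh / 2) := by
    have hsq := mul_one_add_rpow_sub_one_le (sq_nonneg ‖p.2‖) (αh / 2)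
    calc (γ * αh) ^ 2 * (‖p.2‖ ^ 2 * B ^ (αh / 2 - 1))
        = γ * (γ * αh ^ 2) * (‖p.2‖ ^ 2 * B ^ (αh / 2 - 1)) := by ring
      _ ≤ γ * 1 * B ^ (αh / 2) := by gcongr
      _ = γ * B ^ (αh / 2) := by ring
  have key : t * u ^ (q - 1) + (γ * αh) ^ 2 * (‖p.2‖ ^ 2 * B ^ (αh / 2 - 1)) / t ≤
      n * γ * αh - β + γ * B ^ (αh / 2) / t :=
    add_le_add hnl (div_le_div_of_nonneg_right hdiff ht.le)
  rw [sum_pdx_coefDiag_mul_pdx_profileU hγ ht, pdt_profileU hγ ht, nl, abs_of_pos hu]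
  calc -(γ * αh / t) * u * (n - γ * αh * ‖p.2‖ ^ 2 * B ^ (αh / 2 - 1) / t) + u ^ (q - 1) * u
      = u / t * (t * u ^ (q - 1) + (γ * αh) ^ 2 * (‖p.2‖ ^ 2 * B ^ (αh / 2 - 1)) / t) -
          u / t * (n * γ * αh) := by
        field_simp
        ring
    _ ≤ u / t * (n * γ * αh - β + γ * B ^ (αh / 2) / t) - u / t * (n * γ * αh) := by
        gcongr
    _ = u * (-β / t + γ * B ^ (αh / 2) / t ^ 2) := by
        field_simp
        ring

end Supersolution

theorem example3_sharpness_general (n : ℕ) (hn : 1 ≤ n) (α αh q β γ κ : ℝ)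
    (hα : α ≤ 0) (hq1 : 1 < q)
    (hαh : 0 < αh)
    (hβ : β = 1 / (q - 1))
    (hγl : 1 / (αh * n * (q - 1)) < γ) (hγu : γ ≤ 1 / αh ^ 2)
    (hκl : 0 < κ) (hκu : κ ≤ (αh * n * (γ - 1 / (αh * n * (q - 1)))) ^ (1 / (q - 1))) :
    (∃ c : ℝ, 0 < c ∧ Cond8 (fun p : Sp n => coefDiag n αh p) α c) ∧
    ContDiff ℝ (⊤ : ℕ∞) (profileU n αh β γ κ) ∧
    (∀ p, 0 ≤ profileU n αh β γ κ p) ∧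
    profileU n αh β γ κ ≠ 0 ∧
    (∀ p : Sp n,
      (∑ i : Fin n, pdx i (fun p' => coefDiag n αh p' * pdx i (profileU n αh β γ κ) p') p) +
        nl q (profileU n αh β γ κ p) ≤ pdt (profileU n αh β γ κ) p) := by
  have hn' : (1 : ℝ) ≤ n := by exact_mod_cast hn
  have hq' : 0 < q - 1 := by linarith
  have hγ : 0 < γ := lt_trans (by positivity) hγl
  have hβ' : β * (q - 1) = 1 := by rw [hβ]; field_simp
  have hγαh : γ * αh ^ 2 ≤ 1 := by rwa [le_div_iff₀ (by positivity)] at hγu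
  have hκq : κ ^ (q - 1) ≤ n * γ * αh - β := by
    have hX : 0 < αh * n * (γ - 1 / (αh * n * (q - 1))) := by
      have hgap := sub_pos.2 hγl
      positivity
    rw [one_div (q - 1), le_rpow_inv_iff_of_pos hκl.le hX.le hq'] at hκu
    convert hκu using 1
    rw [hβ]
    field_simp
  refine ⟨⟨2, two_pos, cond8_coefDiag hα hαh.le⟩, contDiff_profileU hγ, profileU_nonneg hκl.le,
    fun h => ?_, fun p => ?_⟩
  · exact (profileU_pos hκl (p := ((1 : ℝ), 0)) one_pos).ne' (congrFun h _)
  · rcases le_or_gt p.1 0 with ht | ht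
    · exact profileU_supersolution_of_nonpos hκl.le ht
    · exact profileU_supersolution_of_pos hq1 hβ' hγ hγαh hκl hκq ht

/-- **Example 3** (sharpness of Theorems 1–3 for `α ≤ 0`): the coefficients built from
`α̂ > 0` satisfy condition (8) with exponent `α ≤ 0`, and the profile `u` is a nontrivial
nonnegative `C^∞` classical solution of `u_t ≥ Σᵢ ∂_{x_i}(a_{ii} ∂_{x_i}u) + |u|^{q−1}u`
in the whole space. -/
theorem example3_sharpness (n : ℕ) (hn : 1 ≤ n) (α αh q β γ κ : ℝ)
    (hα : α ≤ 0) (hq1 : 1 < q) (hq2 : 1 + α / n < q)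
    (hαh : 0 < αh) (hqh : 1 + αh / n < q)
    (hβ : β = 1 / (q - 1))
    (hγl : 1 / (αh * n * (q - 1)) < γ) (hγu : γ ≤ 1 / αh ^ 2)
    (hκl : 0 < κ) (hκu : κ ≤ (αh * n * (γ - 1 / (αh * n * (q - 1)))) ^ (1 / (q - 1))) :
    (∃ c : ℝ, 0 < c ∧ Cond8 (fun p : Sp n => coefDiag n αh p) α c) ∧
    ContDiff ℝ (⊤ : ℕ∞) (profileU n αh β γ κ) ∧
    (∀ p, 0 ≤ profileU n αh β γ κ p) ∧
    profileU n αh β γ κ ≠ 0 ∧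
    (∀ p : Sp n,
      (∑ i : Fin n, pdx i (fun p' => coefDiag n αh p' * pdx i (profileU n αh β γ κ) p') p) +
        nl q (profileU n αh β γ κ p) ≤ pdt (profileU n αh β γ κ) p) :=
  example3_sharpness_general n hn α αh q β γ κ hα hq1 hαh hβ hγl hγu hκl hκu
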